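/- arXiv:2005.14098 — 4 statements merged into one kernel-verified Lean document; each statement's English description precedes it below -/
import Mathlib

section
/- Let (f,g) be a state of a 9×9 Sudoku grid satisfying conditions S1 and S2, and suppose it is a final state, i.e., f(c) ≠ 0 for every cell c. Then f is a valid Sudoku solution: every cell contains a digit from 1 to 9, and each digit appears exactly once in every row, every column, and every 3×3 block. -/
/-- Two cells of the 9×9 grid lie in a common group (row, column, or 3×3 block). -/
def SameGroup (c c' : Fin 9 × Fin 9) : Prop :=
  c.1 = c'.1 ∨ c.2 = c'.2 ∨
    ((c.1 : ℕ) / 3 = (c'.1 : ℕ) / 3 ∧ (c.2 : ℕ) / 3 = (c'.2 : ℕ) / 3)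

/-- Condition S1: every candidate set is nonempty. -/
def S1 (g : Fin 9 × Fin 9 → Finset ℕ) : Prop := ∀ c, (g c).Nonempty

/-- Condition S2: a digit is ruled out at a cell if the cell holds a different
nonzero digit, or some other cell in a common group holds that digit. -/
def S2 (f : Fin 9 × Fin 9 → ℕ) (g : Fin 9 × Fin 9 → Finset ℕ) : Prop :=
  ∀ c, ∀ n ∈ Finset.Icc 1 9,
    ((f c ≠ 0 ∧ f c ≠ n) ∨ ∃ c', c' ≠ c ∧ SameGroup c c' ∧ f c' = n) → n ∉ g c

/-- Groups of the 9×9 grid: rows, columns, and 3×3 blocks. -/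
def IsGroup (G : Finset (Fin 9 × Fin 9)) : Prop :=
  (∃ i, G = Finset.univ.filter (fun c => c.1 = i)) ∨
  (∃ j, G = Finset.univ.filter (fun c => c.2 = j)) ∨
  (∃ bi bj : Fin 3, G = Finset.univ.filter
      (fun c => (c.1 : ℕ) / 3 = (bi : ℕ) ∧ (c.2 : ℕ) / 3 = (bj : ℕ)))

/-- A Sudoku solution: every cell holds a digit 1–9 and each digit appears
exactly once in every group. -/
def IsSolution (f : Fin 9 × Fin 9 → ℕ) : Prop :=
  (∀ c, f c ∈ Finset.Icc 1 9) ∧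
  ∀ G : Finset (Fin 9 × Fin 9), IsGroup G →
    ∀ n ∈ Finset.Icc 1 9, ∃! c, c ∈ G ∧ f c = n

/-!
In a final state every cell `c` has some candidate `n ∈ g c` (S1). By S2 the digit `f c ≠ 0`
must equal `n`, and no other cell sharing a group with `c` may hold `n`. Hence `f` is injective
on each group; a group has nine cells and `f` takes values in `{1, …, 9}`, so `f` is a bijection
from each group onto the digits.
-/

theorem Finset.existsUnique_of_injOn_of_card_le {α β : Type*} {s : Finset α} {t : Finset β}
    {f : α → β} (hf : Set.MapsTo f s t) (hinj : Set.InjOn f s) (hst : t.card ≤ s.card) :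
    ∀ b ∈ t, ∃! a, a ∈ s ∧ f a = b := by
  intro b hb
  obtain ⟨a, ha, rfl⟩ := Finset.surjOn_of_injOn_of_card_le f hf hinj hst hb
  exact ⟨a, ⟨ha, rfl⟩, fun a' ⟨ha', hfa'⟩ => hinj ha' ha hfa'⟩

namespace IsGroup

variable {G : Finset (Fin 9 × Fin 9)}

theorem card_eq (hG : IsGroup G) : G.card = 9 := by
  rcases hG with ⟨i, rfl⟩ | ⟨j, rfl⟩ | ⟨bi, bj, rfl⟩
  · fin_cases i <;> decide
  · fin_cases j <;> decide
  · fin_cases bi <;> fin_cases bj <;> decide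

theorem sameGroup (hG : IsGroup G) {c c' : Fin 9 × Fin 9} (hc : c ∈ G) (hc' : c' ∈ G) :
    SameGroup c c' := by
  rcases hG with ⟨i, rfl⟩ | ⟨j, rfl⟩ | ⟨bi, bj, rfl⟩ <;>
    simp only [Finset.mem_filter, Finset.mem_univ, true_and] at hc hc'
  · exact Or.inl (hc.trans hc'.symm)
  · exact Or.inr (Or.inl (hc.trans hc'.symm))
  · exact Or.inr (Or.inr ⟨hc.1.trans hc'.1.symm, hc.2.trans hc'.2.symm⟩)

end IsGroup

namespace S2

variable {f : Fin 9 × Fin 9 → ℕ} {g : Fin 9 × Fin 9 → Finset ℕ} {c : Fin 9 × Fin 9} {n : ℕ}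

theorem eq_of_mem (h2 : S2 f g) (hn9 : n ∈ Finset.Icc 1 9) (hn : n ∈ g c) (hc : f c ≠ 0) :
    f c = n := by
  by_contra hne
  exact h2 c n hn9 (Or.inl ⟨hc, hne⟩) hn

theorem ne_of_sameGroup (h2 : S2 f g) (hn9 : n ∈ Finset.Icc 1 9) (hn : n ∈ g c)
    {c' : Fin 9 × Fin 9} (hne : c' ≠ c) (hsg : SameGroup c c') : f c' ≠ n :=
  fun hc' => h2 c n hn9 (Or.inr ⟨c', hne, hsg, hc'⟩) hn

theorem final_mem_Icc_and_ne_of_sameGroup (hg : ∀ c, g c ⊆ Finset.Icc 1 9) (h1 : S1 g) (h2 : S2 f g)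
    (hfinal : ∀ c, f c ≠ 0) (c : Fin 9 × Fin 9) :
    f c ∈ Finset.Icc 1 9 ∧ ∀ c', c' ≠ c → SameGroup c c' → f c' ≠ f c := by
  obtain ⟨n, hn⟩ := h1 c
  have hfc : f c = n := h2.eq_of_mem (hg c hn) hn (hfinal c)
  subst hfc
  exact ⟨hg c hn, fun c' hne hsg => h2.ne_of_sameGroup (hg c hn) hn hne hsg⟩

end S2

theorem stmt1_general (f : Fin 9 × Fin 9 → ℕ) (g : Fin 9 × Fin 9 → Finset ℕ)
    (hg : ∀ c, g c ⊆ Finset.Icc 1 9)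
    (h1 : S1 g) (h2 : S2 f g) (hfinal : ∀ c, f c ≠ 0) :
    (∀ c, f c ∈ Finset.Icc 1 9) ∧
      ∀ G : Finset (Fin 9 × Fin 9), IsGroup G →
        ∀ n ∈ Finset.Icc 1 9, ∃! c, c ∈ G ∧ f c = n := by
  have key := h2.final_mem_Icc_and_ne_of_sameGroup hg h1 hfinal
  refine ⟨fun c => (key c).1, fun G hG => ?_⟩
  have hinj : Set.InjOn f G := fun a ha b hb hab => by
    by_contra hne
    exact (key a).2 b (Ne.symm hne) (hG.sameGroup ha hb) hab.symm
  exact Finset.existsUnique_of_injOn_of_card_le (fun c _ => (key c).1) hinj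
    (by rw [hG.card_eq]; rfl)

theorem stmt1 (f : Fin 9 × Fin 9 → ℕ) (g : Fin 9 × Fin 9 → Finset ℕ)
    (hf : ∀ c, f c ≤ 9) (hg : ∀ c, g c ⊆ Finset.Icc 1 9)
    (h1 : S1 g) (h2 : S2 f g) (hfinal : ∀ c, f c ≠ 0) :
    (∀ c, f c ∈ Finset.Icc 1 9) ∧
      ∀ G : Finset (Fin 9 × Fin 9), IsGroup G →
        ∀ n ∈ Finset.Icc 1 9, ∃! c, c ∈ G ∧ f c = n :=
  stmt1_general f g hg h1 h2 hfinal
end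

section
/- Let Q be the set of Sudoku states (f,g) on the 9×9 grid satisfying S1 and S2, and let R be a state-transition relation on Q such that: (i) whenever (f,g) R (f',g'), we have g'(c) ⊆ g(c) for every cell c; and (ii) for all q1, q2, q3 with q1 R q2 and q2 R q3, if the candidate components of q1 and q2 are equal then q2 = q3. Then for any infinite sequence q_0, q_1, q_2, ... with q_s R q_{s+1} for all s, there exists k ≤ 649 such that q_s = q_k for all s ≥ k. -/
/-! The number of candidates `∑ c, |g c|` lies between 81 (by S1) and 729, and it drops at every
step that changes the candidate function, so some step among the first 649 keeps the candidates.
From then on condition (ii) makes every step trivial. -/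

theorem exists_le_sub_of_not_imp_lt {m : ℕ → ℕ} {P : ℕ → Prop} {a : ℕ}
    (hlow : ∀ s, a ≤ m s) (hstep : ∀ s, ¬P s → m (s + 1) < m s) :
    ∃ s ≤ m 0 - a, P s := by
  by_contra! h
  have hdrop : ∀ s ≤ m 0 - a + 1, m s + s ≤ m 0 := by
    intro s hs
    induction s with
    | zero => simp
    | succ n ih =>
      have := hstep n (h n (by omega))
      have := ih (by omega)
      omega
  have hend := hdrop _ le_rfl
  have := hlow (m 0 - a + 1)
  have := hlow 0
  omega

theorem Finset.sum_card_lt_of_subset_of_ne {ι α : Type*} [Fintype ι] {g g' : ι → Finset α}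
    (hsub : ∀ i, g' i ⊆ g i) (hne : g' ≠ g) :
    ∑ i, (g' i).card < ∑ i, (g i).card := by
  obtain ⟨i, hi⟩ := Function.ne_iff.mp hne
  exact Finset.sum_lt_sum (fun j _ => Finset.card_le_card (hsub j))
    ⟨i, Finset.mem_univ i, Finset.card_lt_card ((hsub i).ssubset_of_ne hi)⟩

-- A trivial step preserves `G` too, so `hA` propagates along the whole tail.
theorem forall_ge_eq_of_proj_eq {Q β : Type*} {R : Q → Q → Prop} (G : Q → β)
    (hA : ∀ q1 q2 q3 : Q, R q1 q2 → R q2 q3 → G q1 = G q2 → q2 = q3)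
    {q : ℕ → Q} (hR : ∀ s, R (q s) (q (s + 1))) {s : ℕ} (hs : G (q s) = G (q (s + 1))) :
    ∀ t ≥ s + 1, q t = q (s + 1) := by
  have hstep : ∀ t ≥ s, G (q t) = G (q (t + 1)) ∧ q (t + 1) = q (t + 2) := by
    intro t ht
    induction t, ht using Nat.le_induction with
    | base => exact ⟨hs, hA _ _ _ (hR s) (hR (s + 1)) hs⟩
    | succ t _ ih =>
      have hG : G (q (t + 1)) = G (q (t + 2)) := congrArg G ih.2
      exact ⟨hG, hA _ _ _ (hR (t + 1)) (hR (t + 2)) hG⟩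
  intro t ht
  induction t, ht using Nat.le_induction with
  | base => rfl
  | succ t ht ih =>
    obtain ⟨u, rfl⟩ : ∃ u, t = u + 1 := ⟨t - 1, by omega⟩
    exact (hstep u (by omega)).2.symm.trans ih

theorem stmt6_general {Q : Type*}
    (G : Q → Fin 9 × Fin 9 → Finset ℕ)
    (hrange : ∀ q c, G q c ⊆ Finset.Icc 1 9)
    (hS1 : ∀ q, S1 (G q))
    (R : Q → Q → Prop)
    (hmono : ∀ q q', R q q' → ∀ c, G q' c ⊆ G q c)
    (hA : ∀ q1 q2 q3 : Q, R q1 q2 → R q2 q3 → G q1 = G q2 → q2 = q3)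
    (q : ℕ → Q) (hR : ∀ s, R (q s) (q (s + 1))) :
    ∃ k ≤ 649, ∀ s ≥ k, q s = q k := by
  set m : ℕ → ℕ := fun s => ∑ c, (G (q s) c).card
  have hlow : ∀ s, 81 ≤ m s := fun s =>
    calc 81 = ∑ _c : Fin 9 × Fin 9, 1 := by simp
      _ ≤ m s := Finset.sum_le_sum fun c _ => Finset.card_pos.mpr (hS1 (q s) c)
  have hhigh : m 0 ≤ 729 :=
    calc m 0 ≤ ∑ _c : Fin 9 × Fin 9, (Finset.Icc 1 9).card :=
          Finset.sum_le_sum fun c _ => Finset.card_le_card (hrange (q 0) c)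
      _ = 729 := by simp
  obtain ⟨s, hs, hstall⟩ := exists_le_sub_of_not_imp_lt (P := fun s => G (q s) = G (q (s + 1)))
    hlow fun s hne => Finset.sum_card_lt_of_subset_of_ne (hmono _ _ (hR s)) (Ne.symm hne)
  exact ⟨s + 1, by omega, forall_ge_eq_of_proj_eq G hA hR hstall⟩

theorem stmt6 {Q : Type*} (F : Q → Fin 9 × Fin 9 → ℕ)
    (G : Q → Fin 9 × Fin 9 → Finset ℕ)
    (hrange : ∀ q c, G q c ⊆ Finset.Icc 1 9)
    (hS1 : ∀ q, S1 (G q)) (hS2 : ∀ q, S2 (F q) (G q))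
    (R : Q → Q → Prop)
    (hmono : ∀ q q', R q q' → ∀ c, G q' c ⊆ G q c)
    (hA : ∀ q1 q2 q3 : Q, R q1 q2 → R q2 q3 → G q1 = G q2 → q2 = q3)
    (q : ℕ → Q) (hR : ∀ s, R (q s) (q (s + 1))) :
    ∃ k ≤ 649, ∀ s ≥ k, q s = q k :=
  stmt6_general G hrange hS1 R hmono hA q hR
end

section
/- Consider a 9×9 Sudoku puzzle whose clues use at most 7 distinct digits from {1,...,9}. If the puzzle has at least one solution, then it has at least two distinct solutions; in particular, it is not proper. -/
/- Relabelling the digits of a solution by a permutation of `{1, …, 9}` gives again a solution.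
If the clues use at most seven digits, two digits `a ≠ b` are missing from them, so swapping
`a` and `b` keeps every clue; the swap really moves the solution because `a` occurs in it. -/

open Finset

theorem IsSolution.exists_eq {f : Fin 9 × Fin 9 → ℕ} (hf : IsSolution f) {n : ℕ}
    (hn : n ∈ Icc 1 9) : ∃ c, f c = n :=
  let ⟨c, ⟨_, hc⟩, _⟩ := hf.2 _ (Or.inl ⟨0, rfl⟩) n hn
  ⟨c, hc⟩

theorem IsSolution.perm_comp {f : Fin 9 × Fin 9 → ℕ} (hf : IsSolution f) {σ : Equiv.Perm ℕ}
    (hσ : ∀ n, σ n ∈ Icc 1 9 ↔ n ∈ Icc 1 9) : IsSolution (σ ∘ f) := by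
  refine ⟨fun c => (hσ _).2 (hf.1 c), fun G hG n hn => ?_⟩
  have hn' : σ.symm n ∈ Icc 1 9 := (hσ _).1 (by rwa [Equiv.apply_symm_apply])
  simpa only [Function.comp_apply, ← Equiv.eq_symm_apply] using hf.2 G hG _ hn'

theorem Equiv.swap_apply_mem_iff {α : Type*} [DecidableEq α] {s : Finset α} {a b : α}
    (ha : a ∈ s) (hb : b ∈ s) (x : α) : swap a b x ∈ s ↔ x ∈ s := by
  rcases eq_or_ne x a with rfl | hxa
  · simp [ha, hb]
  rcases eq_or_ne x b with rfl | hxb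
  · simp [ha, hb]
  rw [swap_apply_of_ne_of_ne hxa hxb]

theorem exists_pair_mem_sdiff_of_card_le {D : Finset ℕ} (hD : #D ≤ 7) :
    ∃ a ∈ Icc 1 9 \ D, ∃ b ∈ Icc 1 9 \ D, a ≠ b := by
  refine one_lt_card.mp (lt_of_lt_of_le ?_ (le_card_sdiff D (Icc 1 9)))
  simp only [Nat.card_Icc]
  omega

theorem stmt9 (P : Fin 9 × Fin 9 → Option ℕ)
    (D : Finset ℕ) (hD : D.card ≤ 7)
    (hclues : ∀ c n, P c = some n → n ∈ D)
    (hsol : ∃ f, IsSolution f ∧ ∀ c n, P c = some n → f c = n) :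
    ∃ f f' : Fin 9 × Fin 9 → ℕ,
      (IsSolution f ∧ ∀ c n, P c = some n → f c = n) ∧
      (IsSolution f' ∧ ∀ c n, P c = some n → f' c = n) ∧ f ≠ f' := by
  obtain ⟨f, hf, hfP⟩ := hsol
  obtain ⟨a, ha, b, hb, hab⟩ := exists_pair_mem_sdiff_of_card_le hD
  rw [mem_sdiff] at ha hb
  refine ⟨f, Equiv.swap a b ∘ f, ⟨hf, hfP⟩,
    ⟨hf.perm_comp (Equiv.swap_apply_mem_iff ha.1 hb.1), ?_⟩, ?_⟩
  · intro c n hc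
    have hnD := hclues c n hc
    rw [Function.comp_apply, hfP c n hc]
    exact Equiv.swap_apply_of_ne_of_ne (ne_of_mem_of_not_mem hnD ha.2)
      (ne_of_mem_of_not_mem hnD hb.2)
  · intro heq
    obtain ⟨c, hc⟩ := hf.exists_eq ha.1
    have := congrFun heq c
    rw [Function.comp_apply, hc, Equiv.swap_apply_left] at this
    exact hab this
end

section
/- Let A and B be two groups of the 9×9 Sudoku grid with |A ∩ B| = 3 (e.g., a row or column and a 3×3 block intersecting in 3 cells). Let f be a Sudoku solution and n a digit in {1,...,9}. If no cell c ∈ A \ B satisfies f(c) = n, then no cell c ∈ B \ A satisfies f(c) = n. -/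
theorem Finset.apply_ne_of_mem_sdiff_of_locked {α β : Type*} [DecidableEq α] {A B : Finset α}
    {f : α → β} {n : β} (hA : ∃ a ∈ A, f a = n)
    (hB : ∀ b ∈ B, ∀ b' ∈ B, f b = n → f b' = n → b = b')
    (hAB : ∀ c ∈ A \ B, f c ≠ n) : ∀ c ∈ B \ A, f c ≠ n := by
  intro c hc hfc
  obtain ⟨a, haA, hfa⟩ := hA
  have haB : a ∈ B := by_contra fun haB => hAB a (Finset.mem_sdiff.2 ⟨haA, haB⟩) hfa
  rw [Finset.mem_sdiff] at hc
  exact hc.2 (hB c hc.1 a haB hfc hfa ▸ haA)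

theorem stmt15_general (A B : Finset (Fin 9 × Fin 9)) (hA : IsGroup A) (hB : IsGroup B)
    (f : Fin 9 × Fin 9 → ℕ) (hf : IsSolution f)
    (n : ℕ) (hn : n ∈ Finset.Icc 1 9)
    (hAdiff : ∀ c ∈ A \ B, f c ≠ n) :
    ∀ c ∈ B \ A, f c ≠ n := by
  obtain ⟨a, ⟨haA, hfa⟩, -⟩ := hf.2 A hA n hn
  refine Finset.apply_ne_of_mem_sdiff_of_locked ⟨a, haA, hfa⟩ ?_ hAdiff
  intro b hb b' hb' hfb hfb'
  exact (hf.2 B hB n hn).unique ⟨hb, hfb⟩ ⟨hb', hfb'⟩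

theorem stmt15 (A B : Finset (Fin 9 × Fin 9)) (hA : IsGroup A) (hB : IsGroup B)
    (hAB : (A ∩ B).card = 3)
    (f : Fin 9 × Fin 9 → ℕ) (hf : IsSolution f)
    (n : ℕ) (hn : n ∈ Finset.Icc 1 9)
    (hAdiff : ∀ c ∈ A \ B, f c ≠ n) :
    ∀ c ∈ B \ A, f c ≠ n :=
  stmt15_general A B hA hB f hf n hn hAdiff
end
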